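/- Fix u ≤ d ≤ r, and define the NIECE estimator β̂^N(ω) = V_u D_u^{-1} U_u' Y(ω) (where V_u, U_u, D_u consist of the first u permuted columns/entries). Then the conditional reducible prediction risk satisfies 𝔼[ tr( (β̂^N − V_d V_d' β*)' Σ_x (β̂^N − V_d V_d' β*) ) ] = tr(Σ_ε)·tr(V_u D_u^{-2} V_u' Σ_x) + vec(β*)'(I_q ⊗ (V_u V_u' − V_d V_d') Σ_x (V_u V_u' − V_d V_d')) vec(β*). -/

import Mathlib

/-!
With `A = V_u D_u⁻¹ U_uᵀ` the SVD gives `A X = V_u V_uᵀ`, so the error of the NIECE estimator is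
`(V_u V_uᵀ - V_d V_dᵀ) β* + A E`: a deterministic bias plus a centred linear image of the noise.
In the expected quadratic form the cross terms vanish because `E` is centred, the noise term is
`tr Σ_ε · tr (A Aᵀ Σ_x)` because the rows of `E` are uncorrelated, and `A Aᵀ = V_u D_u⁻² V_uᵀ`
because `U_u` has orthonormal columns.
-/

open Matrix
open scoped Kronecker

/-- The vectorization `vec(β)` of a `p × q` matrix, indexed to match `I_q ⊗ A`
(the index `(k, i)` with `k ∈ Fin q`, `i ∈ Fin p` corresponds to entry `β i k`). -/
def vecM {p q : ℕ} (β : Matrix (Fin p) (Fin q) ℝ) : Fin q × Fin p → ℝ :=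
  fun ki => β ki.2 ki.1

/-- EgReg reducible prediction risk
`R_E(d, λ) = tr(Σ_ε)·tr(V_d D_d⁻² Φ_d² (Φ_d + λ I_d)⁻² V_d' Σ_x)
  + λ²·vec(β*)'(I_q ⊗ V_d (Φ_d + λ I_d)⁻¹ V_d' Σ_x V_d (Φ_d + λ I_d)⁻¹ V_d') vec(β*)`. -/
noncomputable def RE {p q d : ℕ}
    (Vd : Matrix (Fin p) (Fin d) ℝ) (Dd Φd : Matrix (Fin d) (Fin d) ℝ)
    (Sx : Matrix (Fin p) (Fin p) ℝ) (Se : Matrix (Fin q) (Fin q) ℝ)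
    (β : Matrix (Fin p) (Fin q) ℝ) (lam : ℝ) : ℝ :=
  Se.trace * (Vd * (Dd ^ 2)⁻¹ * Φd ^ 2 * ((Φd + lam • 1) ^ 2)⁻¹ * Vdᵀ * Sx).trace
  + lam ^ 2 * vecM β ⬝ᵥ (((1 : Matrix (Fin q) (Fin q) ℝ) ⊗ₖ
      (Vd * (Φd + lam • 1)⁻¹ * Vdᵀ * Sx * Vd * (Φd + lam • 1)⁻¹ * Vdᵀ)).mulVec (vecM β))

/-- NIECE reducible prediction risk
`R_N(u, d) = tr(Σ_ε)·tr(V_u D_u⁻² V_u' Σ_x)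
  + vec(β*)'(I_q ⊗ (V_u V_u' − V_d V_d') Σ_x (V_u V_u' − V_d V_d')) vec(β*)`. -/
noncomputable def RN {p q u d : ℕ}
    (Vu : Matrix (Fin p) (Fin u) ℝ) (Du : Matrix (Fin u) (Fin u) ℝ)
    (Vd : Matrix (Fin p) (Fin d) ℝ)
    (Sx : Matrix (Fin p) (Fin p) ℝ) (Se : Matrix (Fin q) (Fin q) ℝ)
    (β : Matrix (Fin p) (Fin q) ℝ) : ℝ :=
  Se.trace * (Vu * (Du ^ 2)⁻¹ * Vuᵀ * Sx).trace
  + vecM β ⬝ᵥ (((1 : Matrix (Fin q) (Fin q) ℝ) ⊗ₖ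
      ((Vu * Vuᵀ - Vd * Vdᵀ) * Sx * (Vu * Vuᵀ - Vd * Vdᵀ))).mulVec (vecM β))

/-- The largest eigenvalue of a square matrix. -/
noncomputable def maxEig {m : ℕ} (A : Matrix (Fin m) (Fin m) ℝ) : ℝ :=
  sSup {t : ℝ | ∃ w : Fin m → ℝ, w ≠ 0 ∧ A.mulVec w = t • w}

open MeasureTheory

section Noise

variable {Ω : Type*} [MeasurableSpace Ω] {P : Measure Ω} {ι κ : Type*} [Fintype ι] [Fintype κ]
  {E : Ω → Matrix ι κ ℝ}

lemma trace_mul_eq_sum (B : Matrix κ ι ℝ) (Z : Matrix ι κ ℝ) :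
    (B * Z).trace = ∑ k, ∑ i, B k i * Z i k := by
  simp only [trace, diag, mul_apply]

lemma trace_transpose_mul_mul_eq_sum (C : Matrix ι ι ℝ) (Z : Matrix ι κ ℝ) :
    (Zᵀ * C * Z).trace = ∑ k, ∑ i, ∑ j, C i j * (Z i k * Z j k) := by
  simp only [trace, diag, mul_apply, transpose_apply, Finset.sum_mul]
  exact Finset.sum_congr rfl fun k _ => Finset.sum_comm.trans <|
    Finset.sum_congr rfl fun i _ => Finset.sum_congr rfl fun j _ => by ring

lemma integrable_trace_mul (hint : ∀ i k, Integrable (fun ω => E ω i k) P) (B : Matrix κ ι ℝ) :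
    Integrable (fun ω => (B * E ω).trace) P := by
  simp only [trace_mul_eq_sum]
  exact integrable_finsetSum _ fun k _ => integrable_finsetSum _ fun i _ =>
    (hint i k).const_mul _

lemma integral_trace_mul_eq_zero (hint : ∀ i k, Integrable (fun ω => E ω i k) P)
    (hmean : ∀ i k, ∫ ω, E ω i k ∂P = 0) (B : Matrix κ ι ℝ) :
    ∫ ω, (B * E ω).trace ∂P = 0 := by
  simp only [trace_mul_eq_sum]
  rw [integral_finsetSum (f := fun k ω => ∑ i, B k i * E ω i k) _
    fun k _ => integrable_finsetSum _ fun i _ => (hint i k).const_mul _]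
  refine Finset.sum_eq_zero fun k _ => ?_
  rw [integral_finsetSum (f := fun i ω => B k i * E ω i k) _ fun i _ => (hint i k).const_mul _]
  simp [integral_const_mul, hmean]

omit [Fintype ι] [Fintype κ] in
lemma integrable_mul_entries (hL2 : ∀ i k, MemLp (fun ω => E ω i k) 2 P) (i j : ι) (k : κ) :
    Integrable (fun ω => E ω i k * E ω j k) P :=
  (hL2 i k).integrable_mul (hL2 j k)

lemma integrable_trace_transpose_mul_mul (hL2 : ∀ i k, MemLp (fun ω => E ω i k) 2 P)
    (C : Matrix ι ι ℝ) :
    Integrable (fun ω => ((E ω)ᵀ * C * E ω).trace) P := by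
  simp only [trace_transpose_mul_mul_eq_sum]
  exact integrable_finsetSum _ fun k _ => integrable_finsetSum _ fun i _ =>
    integrable_finsetSum _ fun j _ => (integrable_mul_entries hL2 i j k).const_mul _

lemma integral_trace_transpose_mul_mul [DecidableEq ι] (hL2 : ∀ i k, MemLp (fun ω => E ω i k) 2 P)
    {Se : Matrix κ κ ℝ}
    (hcov : ∀ i j k l, ∫ ω, E ω i k * E ω j l ∂P = (if i = j then (1:ℝ) else 0) * Se k l)
    (C : Matrix ι ι ℝ) :
    ∫ ω, ((E ω)ᵀ * C * E ω).trace ∂P = Se.trace * C.trace := by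
  have hint i j k := (integrable_mul_entries hL2 i j k).const_mul (C i j)
  simp only [trace_transpose_mul_mul_eq_sum]
  rw [integral_finsetSum (f := fun k ω => ∑ i, ∑ j, C i j * (E ω i k * E ω j k)) _
    fun k _ => integrable_finsetSum _ fun i _ => integrable_finsetSum _ fun j _ => hint i j k]
  have hk k : ∫ ω, ∑ i, ∑ j, C i j * (E ω i k * E ω j k) ∂P = Se k k * C.trace := by
    rw [integral_finsetSum (f := fun i ω => ∑ j, C i j * (E ω i k * E ω j k)) _
      fun i _ => integrable_finsetSum _ fun j _ => hint i j k]
    simp_rw [integral_finsetSum (f := fun j ω => C _ j * (E ω _ k * E ω j k)) _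
      fun j _ => hint _ j k, integral_const_mul, hcov]
    simp [trace, Finset.mul_sum, mul_comm]
  simp only [hk, trace, diag, Finset.sum_mul]

lemma trace_transpose_add_mul_mul_add_mul {m : Type*} [Fintype m] (K : Matrix m κ ℝ)
    (A : Matrix m ι ℝ) (S : Matrix m m ℝ) (Z : Matrix ι κ ℝ) :
    ((K + A * Z)ᵀ * S * (K + A * Z)).trace =
      (Kᵀ * S * K).trace + (Kᵀ * S * A * Z).trace + (Kᵀ * Sᵀ * A * Z).trace +
        (Zᵀ * (Aᵀ * S * A) * Z).trace := by
  have hcross : ((A * Z)ᵀ * S * K).trace = (Kᵀ * Sᵀ * A * Z).trace := by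
    rw [← trace_transpose]
    simp only [transpose_mul, transpose_transpose, Matrix.mul_assoc]
  simp only [transpose_add, Matrix.add_mul, Matrix.mul_add, trace_add, ← hcross]
  simp only [transpose_mul, Matrix.mul_assoc]
  ring

lemma integral_trace_transpose_add_mul_mul_add_mul [IsProbabilityMeasure P] [DecidableEq ι]
    {m : Type*} [Fintype m] (hL2 : ∀ i k, MemLp (fun ω => E ω i k) 2 P)
    (hmean : ∀ i k, ∫ ω, E ω i k ∂P = 0) {Se : Matrix κ κ ℝ}
    (hcov : ∀ i j k l, ∫ ω, E ω i k * E ω j l ∂P = (if i = j then (1:ℝ) else 0) * Se k l)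
    (K : Matrix m κ ℝ) (A : Matrix m ι ℝ) (S : Matrix m m ℝ) :
    ∫ ω, ((K + A * E ω)ᵀ * S * (K + A * E ω)).trace ∂P =
      Se.trace * (A * Aᵀ * S).trace + (Kᵀ * S * K).trace := by
  have hint i k := (hL2 i k).integrable one_le_two
  simp only [trace_transpose_add_mul_mul_add_mul]
  have hlin (B : Matrix κ ι ℝ) : Integrable (fun ω => (B * E ω).trace) P :=
    integrable_trace_mul hint B
  have hquad := integrable_trace_transpose_mul_mul hL2 (Aᵀ * S * A)
  rw [integral_add (by fun_prop) hquad, integral_add (by fun_prop) (hlin _),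
    integral_add (integrable_const _) (hlin _), integral_const,
    integral_trace_mul_eq_zero hint hmean, integral_trace_mul_eq_zero hint hmean,
    integral_trace_transpose_mul_mul hL2 hcov, trace_mul_comm (Aᵀ * S), ← Matrix.mul_assoc]
  simp [add_comm]

end Noise

section ColumnSelection

variable {m n r s : Type*} [Fintype n] [DecidableEq r] [DecidableEq s]

lemma transpose_submatrix_mul_submatrix {U : Matrix n r ℝ} (hU : Uᵀ * U = 1) {f : s → r}
    (hf : Function.Injective f) : (U.submatrix id f)ᵀ * U.submatrix id f = 1 := by
  rw [transpose_submatrix, ← submatrix_mul _ _ f id f Function.bijective_id, hU,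
    submatrix_one f hf]

variable [Fintype r] [Fintype s]

lemma transpose_submatrix_mul_svd {U : Matrix n r ℝ} (hU : Uᵀ * U = 1) (σ : r → ℝ)
    (V : Matrix m r ℝ) (f : s → r) :
    (U.submatrix id f)ᵀ * (U * diagonal σ * Vᵀ) =
      diagonal (fun j => σ (f j)) * (V.submatrix id f)ᵀ := by
  rw [transpose_submatrix, ← submatrix_id_id (U * diagonal σ * Vᵀ),
    ← submatrix_mul _ _ f id id Function.bijective_id, ← Matrix.mul_assoc, ← Matrix.mul_assoc, hU,
    Matrix.one_mul]
  ext j b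
  simp [diagonal_mul]

lemma submatrix_mul_inv_mul_transpose_mul_svd {U : Matrix n r ℝ} (hU : Uᵀ * U = 1) {σ : r → ℝ}
    (V : Matrix m r ℝ) {f : s → r} (hσ : ∀ j, σ (f j) ≠ 0) :
    V.submatrix id f * (diagonal (fun j => σ (f j)))⁻¹ * (U.submatrix id f)ᵀ *
      (U * diagonal σ * Vᵀ) = V.submatrix id f * (V.submatrix id f)ᵀ := by
  have hD : IsUnit (diagonal (fun j => σ (f j))).det := by
    rw [det_diagonal]
    exact (Finset.prod_ne_zero_iff.mpr fun j _ => hσ j).isUnit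
  rw [Matrix.mul_assoc, transpose_submatrix_mul_svd hU, Matrix.mul_assoc, ← Matrix.mul_assoc _⁻¹,
    nonsing_inv_mul _ hD, Matrix.one_mul]

end ColumnSelection

lemma mul_inv_mul_transpose_mul_self {m n s : Type*} [Fintype n] [Fintype s] [DecidableEq s]
    (V : Matrix m s ℝ) {D : Matrix s s ℝ} (hD : Dᵀ = D) {U : Matrix n s ℝ} (hU : Uᵀ * U = 1) :
    V * D⁻¹ * Uᵀ * (V * D⁻¹ * Uᵀ)ᵀ = V * (D ^ 2)⁻¹ * Vᵀ := by
  rw [← inv_pow', sq]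
  simp only [transpose_mul, transpose_transpose, transpose_nonsing_inv, hD, Matrix.mul_assoc]
  rw [← Matrix.mul_assoc Uᵀ, hU, Matrix.one_mul]

lemma vecM_dotProduct_one_kronecker_mulVec {p q : ℕ} (C : Matrix (Fin p) (Fin p) ℝ)
    (β : Matrix (Fin p) (Fin q) ℝ) :
    vecM β ⬝ᵥ (((1 : Matrix (Fin q) (Fin q) ℝ) ⊗ₖ C).mulVec (vecM β)) = (βᵀ * C * β).trace := by
  simp only [dotProduct, vecM, mulVec, kroneckerMap_apply, one_apply, ite_mul, one_mul, zero_mul,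
    Fintype.sum_prod_type, Finset.sum_ite_irrel, Finset.sum_const_zero, Finset.sum_ite_eq,
    Finset.mem_univ, ↓reduceIte, Finset.mul_sum, trace, diag_apply, mul_apply, transpose_apply,
    Finset.sum_mul]
  refine Finset.sum_congr rfl fun k _ => ?_
  rw [Finset.sum_comm]
  exact Finset.sum_congr rfl fun i _ => Finset.sum_congr rfl fun j _ => by ring

theorem niece_conditional_reducible_risk_general
    (n p q r : ℕ)
    (X : Matrix (Fin n) (Fin p) ℝ)
    (U : Matrix (Fin n) (Fin r) ℝ) (V : Matrix (Fin p) (Fin r) ℝ) (σ : Fin r → ℝ)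
    (hSVD : X = U * Matrix.diagonal σ * Vᵀ)
    (hU : Uᵀ * U = 1)
    (hσpos : ∀ j, 0 < σ j)
    (π : Equiv.Perm (Fin r))
    (Sx : Matrix (Fin p) (Fin p) ℝ)
    (Se : Matrix (Fin q) (Fin q) ℝ)
    (β : Matrix (Fin p) (Fin q) ℝ)
    (u d : ℕ) (hud : u ≤ d) (hdr : d ≤ r)
    -- probability space and mean-zero noise with Var(vec E) = Σ_ε ⊗ I_n
    {Ω : Type*} [MeasurableSpace Ω] (P : Measure Ω) [IsProbabilityMeasure P]
    (E : Ω → Matrix (Fin n) (Fin q) ℝ)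
    (hL2 : ∀ i k, MemLp (fun ω => E ω i k) 2 P)
    (hmean : ∀ i k, ∫ ω, E ω i k ∂P = 0)
    (hcov : ∀ i j k l, ∫ ω, E ω i k * E ω j l ∂P = (if i = j then (1:ℝ) else 0) * Se k l)
    -- the response and the NIECE estimator
    (Y : Ω → Matrix (Fin n) (Fin q) ℝ) (hY : ∀ ω, Y ω = X * β + E ω)
    (Vu : Matrix (Fin p) (Fin u) ℝ)
    (hVu : Vu = V.submatrix id (fun j => π (Fin.castLE (hud.trans hdr) j)))
    (Uu : Matrix (Fin n) (Fin u) ℝ)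
    (hUu : Uu = U.submatrix id (fun j => π (Fin.castLE (hud.trans hdr) j)))
    (Du : Matrix (Fin u) (Fin u) ℝ)
    (hDu : Du = Matrix.diagonal (fun j => σ (π (Fin.castLE (hud.trans hdr) j))))
    (Vd : Matrix (Fin p) (Fin d) ℝ)
    (βN : Ω → Matrix (Fin p) (Fin q) ℝ)
    (hβN : ∀ ω, βN ω = Vu * Du⁻¹ * Uuᵀ * Y ω) :
    ∫ ω, ((βN ω - Vd * Vdᵀ * β)ᵀ * Sx * (βN ω - Vd * Vdᵀ * β)).trace ∂P =
      RN Vu Du Vd Sx Se β := by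
  set f : Fin u → Fin r := fun j => π (Fin.castLE (hud.trans hdr) j)
  have hf : Function.Injective f := fun a b h => Fin.castLE_injective _ (π.injective h)
  subst hVu hUu hDu hSVD
  set A := V.submatrix id f * (diagonal (fun j => σ (f j)))⁻¹ * (U.submatrix id f)ᵀ
  set M := V.submatrix id f * (V.submatrix id f)ᵀ - Vd * Vdᵀ
  have hAX : A * (U * diagonal σ * Vᵀ) = V.submatrix id f * (V.submatrix id f)ᵀ :=
    submatrix_mul_inv_mul_transpose_mul_svd hU V fun j => (hσpos (f j)).ne'
  have hAAt : A * Aᵀ = V.submatrix id f * (diagonal (fun j => σ (f j)) ^ 2)⁻¹ *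
      (V.submatrix id f)ᵀ :=
    mul_inv_mul_transpose_mul_self _ (diagonal_transpose _) (transpose_submatrix_mul_submatrix hU hf)
  have hM : Mᵀ = M := by simp [M, transpose_sub, transpose_mul]
  have herr ω : βN ω - Vd * Vdᵀ * β = M * β + A * E ω := by
    rw [hβN, hY, Matrix.mul_add, ← Matrix.mul_assoc, hAX, Matrix.sub_mul]
    abel
  simp only [herr]
  rw [integral_trace_transpose_add_mul_mul_add_mul hL2 hmean hcov, hAAt, RN,
    vecM_dotProduct_one_kronecker_mulVec, transpose_mul, hM]
  simp only [Matrix.mul_assoc]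
  rfl

theorem niece_conditional_reducible_risk
    (n p q r : ℕ)
    (X : Matrix (Fin n) (Fin p) ℝ)
    (U : Matrix (Fin n) (Fin r) ℝ) (V : Matrix (Fin p) (Fin r) ℝ) (σ : Fin r → ℝ)
    (hrank : X.rank = r)
    (hSVD : X = U * Matrix.diagonal σ * Vᵀ)
    (hU : Uᵀ * U = 1) (hV : Vᵀ * V = 1)
    (hσpos : ∀ j, 0 < σ j) (hσanti : Antitone σ)
    (π : Equiv.Perm (Fin r))
    (Sx : Matrix (Fin p) (Fin p) ℝ) (hSx : Sx.PosSemidef)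
    (Se : Matrix (Fin q) (Fin q) ℝ) (hSe : Se.PosSemidef)
    (β : Matrix (Fin p) (Fin q) ℝ)
    (u d : ℕ) (hud : u ≤ d) (hdr : d ≤ r)
    -- probability space and mean-zero noise with Var(vec E) = Σ_ε ⊗ I_n
    {Ω : Type*} [MeasurableSpace Ω] (P : Measure Ω) [IsProbabilityMeasure P]
    (E : Ω → Matrix (Fin n) (Fin q) ℝ)
    (hL2 : ∀ i k, MemLp (fun ω => E ω i k) 2 P)
    (hmean : ∀ i k, ∫ ω, E ω i k ∂P = 0)
    (hcov : ∀ i j k l, ∫ ω, E ω i k * E ω j l ∂P = (if i = j then (1:ℝ) else 0) * Se k l)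
    -- the response and the NIECE estimator
    (Y : Ω → Matrix (Fin n) (Fin q) ℝ) (hY : ∀ ω, Y ω = X * β + E ω)
    (Vu : Matrix (Fin p) (Fin u) ℝ)
    (hVu : Vu = V.submatrix id (fun j => π (Fin.castLE (hud.trans hdr) j)))
    (Uu : Matrix (Fin n) (Fin u) ℝ)
    (hUu : Uu = U.submatrix id (fun j => π (Fin.castLE (hud.trans hdr) j)))
    (Du : Matrix (Fin u) (Fin u) ℝ)
    (hDu : Du = Matrix.diagonal (fun j => σ (π (Fin.castLE (hud.trans hdr) j))))
    (Vd : Matrix (Fin p) (Fin d) ℝ) (hVd : Vd = V.submatrix id (fun j => π (Fin.castLE hdr j)))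
    (βN : Ω → Matrix (Fin p) (Fin q) ℝ)
    (hβN : ∀ ω, βN ω = Vu * Du⁻¹ * Uuᵀ * Y ω) :
    ∫ ω, ((βN ω - Vd * Vdᵀ * β)ᵀ * Sx * (βN ω - Vd * Vdᵀ * β)).trace ∂P =
      RN Vu Du Vd Sx Se β :=
  niece_conditional_reducible_risk_general n p q r X U V σ hSVD hU hσpos π Sx Se β u d hud hdr P E
    hL2 hmean hcov Y hY Vu hVu Uu hUu Du hDu Vd βN hβN
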